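/- Let P_1, …, P_{k−1} be pairwise disjoint affine hyperplanes in ℝ^{n+1} each meeting the open unit ball. Then the complement of their union in the closed unit ball D^{n+1} has exactly k connected components. -/
import Mathlib


open RealInnerProductSpace

private lemma exists_count (T : Finset ℝ) (hT : ∀ t ∈ T, t ∈ Set.Ioo (-1:ℝ) 1) :
    ∀ j : ℕ, j ≤ T.card →
      ∃ s, s ∈ Set.Icc (-1:ℝ) 1 ∧ s ∉ T ∧ (T.filter (· < s)).card = j := by
  intro j
  induction j with
  | zero =>
    intro _
    refine ⟨-1, ⟨le_refl _, by norm_num⟩, fun h => absurd (hT _ h).1 (lt_irrefl _), ?_⟩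
    rw [Finset.card_eq_zero, Finset.filter_eq_empty_iff]
    intro t ht
    exact not_lt.2 (hT t ht).1.le
  | succ j ih =>
    intro hj
    obtain ⟨s, hs1, hs2, hs3⟩ := ih (Nat.le_of_succ_le hj)
    have hVne : (T.filter (s < ·)).Nonempty := by
      by_contra h
      rw [Finset.not_nonempty_iff_eq_empty, Finset.filter_eq_empty_iff] at h
      have hTeq : T.filter (· < s) = T := by
        apply Finset.filter_true_of_mem
        intro t ht
        rcases lt_trichotomy t s with h1 | h1 | h1
        · exact h1
        · exact absurd (h1 ▸ ht) hs2
        · exact absurd h1 (h ht)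
      rw [hTeq] at hs3
      omega
    set tstar := (T.filter (s < ·)).min' hVne with htstar
    have htmem : tstar ∈ T.filter (s < ·) := Finset.min'_mem _ _
    have htT : tstar ∈ T := (Finset.mem_filter.1 htmem).1
    have hst : s < tstar := (Finset.mem_filter.1 htmem).2
    by_cases hU : (T.filter (tstar < ·)).Nonempty
    · set u := (T.filter (tstar < ·)).min' hU with hu
      have humem : u ∈ T.filter (tstar < ·) := Finset.min'_mem _ _
      have huT : u ∈ T := (Finset.mem_filter.1 humem).1
      have htu : tstar < u := (Finset.mem_filter.1 humem).2
      set s' := (tstar + u) / 2 with hs'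
      have h1 : tstar < s' := by rw [hs']; linarith
      have h2 : s' < u := by rw [hs']; linarith
      have hs'T : s' ∉ T := by
        intro h
        have : s' ∈ T.filter (tstar < ·) := Finset.mem_filter.2 ⟨h, h1⟩
        exact absurd (Finset.min'_le _ _ this) (not_le.2 h2)
      refine ⟨s', ⟨by have := (hT _ htT).1; linarith, by have := (hT _ huT).2; linarith⟩,
        hs'T, ?_⟩
      have hfe : T.filter (· < s') = insert tstar (T.filter (· < s)) := by
        ext t
        simp only [Finset.mem_filter, Finset.mem_insert]
        constructor
        · rintro ⟨htT', hts'⟩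
          rcases lt_trichotomy t s with h3 | h3 | h3
          · exact Or.inr ⟨htT', h3⟩
          · exact absurd (h3 ▸ htT') hs2
          · have htV : t ∈ T.filter (s < ·) := Finset.mem_filter.2 ⟨htT', h3⟩
            have h4 : tstar ≤ t := Finset.min'_le _ _ htV
            rcases eq_or_lt_of_le h4 with h5 | h5
            · exact Or.inl h5.symm
            · have : t ∈ T.filter (tstar < ·) := Finset.mem_filter.2 ⟨htT', h5⟩
              have := Finset.min'_le _ _ this
              linarith
        · rintro (rfl | ⟨h3, h4⟩)
          · exact ⟨htT, h1⟩
          · exact ⟨h3, by linarith⟩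
      rw [hfe, Finset.card_insert_of_notMem, hs3]
      intro h
      exact absurd (Finset.mem_filter.1 h).2 (not_lt.2 hst.le)
    · rw [Finset.not_nonempty_iff_eq_empty, Finset.filter_eq_empty_iff] at hU
      have hTeq : T = insert tstar (T.filter (· < s)) := by
        ext t
        simp only [Finset.mem_filter, Finset.mem_insert]
        constructor
        · intro htT'
          rcases lt_trichotomy t s with h3 | h3 | h3
          · exact Or.inr ⟨htT', h3⟩
          · exact absurd (h3 ▸ htT') hs2
          · have htV : t ∈ T.filter (s < ·) := Finset.mem_filter.2 ⟨htT', h3⟩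
            have h4 : tstar ≤ t := Finset.min'_le _ _ htV
            rcases eq_or_lt_of_le h4 with h5 | h5
            · exact Or.inl h5.symm
            · exact absurd h5 (hU htT')
        · rintro (rfl | ⟨h3, _⟩)
          · exact htT
          · exact h3
      have hcard : T.card = j + 1 := by
        rw [hTeq, Finset.card_insert_of_notMem, hs3]
        intro h
        exact absurd (Finset.mem_filter.1 h).2 (not_lt.2 hst.le)
      refine ⟨1, ⟨by norm_num, le_refl _⟩, fun h => absurd (hT _ h).2 (lt_irrefl _), ?_⟩
      rw [Finset.filter_true_of_mem fun t ht => (hT t ht).2, hcard]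

private lemma card_components_slab (n : ℕ) (v0 : EuclideanSpace ℝ (Fin (n + 1)))
    (hv0 : ‖v0‖ = 1) (T : Finset ℝ) (hT : ∀ t ∈ T, t ∈ Set.Ioo (-1:ℝ) 1) :
    Nat.card (ConnectedComponents
      ↥(Metric.closedBall (0 : EuclideanSpace ℝ (Fin (n + 1))) 1 \
        {x : EuclideanSpace ℝ (Fin (n + 1)) | ⟪x, v0⟫ ∈ (T : Set ℝ)})) = T.card + 1 := by
  set m := T.card with hm
  -- the counting function
  set X : Set (EuclideanSpace ℝ (Fin (n + 1))) := Metric.closedBall (0 : EuclideanSpace ℝ (Fin (n + 1))) 1 \ {x : EuclideanSpace ℝ (Fin (n + 1)) | ⟪x, v0⟫ ∈ (T : Set ℝ)} with hX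
  set f : X → Fin (m + 1) := fun x =>
    ⟨(T.filter (· < ⟪(x : EuclideanSpace ℝ (Fin (n + 1))), v0⟫)).card, Nat.lt_succ_of_le (Finset.card_filter_le _ _)⟩
    with hf
  have hg : Continuous fun x : X => (⟪(x : EuclideanSpace ℝ (Fin (n + 1))), v0⟫ : ℝ) :=
    Continuous.inner continuous_subtype_val continuous_const
  have hlc : IsLocallyConstant f := by
    rw [IsLocallyConstant.iff_exists_open]
    intro x
    set s : ℝ := ⟪(x : EuclideanSpace ℝ (Fin (n + 1))), v0⟫ with hsdef
    have hsT : s ∉ T := fun h => x.2.2 h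
    obtain ⟨ε, hε, hεT⟩ : ∃ ε > (0:ℝ), ∀ t ∈ T, ε ≤ |t - s| := by
      by_cases h : T.Nonempty
      · refine ⟨(T.image fun t => |t - s|).min' (h.image _), ?_, ?_⟩
        · obtain ⟨t0, ht0, he⟩ := Finset.mem_image.1 (Finset.min'_mem (T.image fun t => |t - s|)
            (h.image _))
          rw [← he]
          exact abs_pos.2 (sub_ne_zero.2 fun hts => hsT (hts ▸ ht0))
        · intro t ht
          exact Finset.min'_le _ _ (Finset.mem_image_of_mem _ ht)
      · exact ⟨1, one_pos, fun t ht => absurd ⟨t, ht⟩ h⟩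
    refine ⟨(fun y : X => (⟪(y : EuclideanSpace ℝ (Fin (n + 1))), v0⟫ : ℝ)) ⁻¹' Metric.ball s ε,
      hg.isOpen_preimage _ Metric.isOpen_ball, ?_, ?_⟩
    · exact Metric.mem_ball_self hε
    · intro y hy
      have hy' : |(⟪(y : EuclideanSpace ℝ (Fin (n + 1))), v0⟫ : ℝ) - s| < ε := by
        simpa [Real.dist_eq] using hy
      apply Fin.ext
      show (T.filter (· < ⟪(y : EuclideanSpace ℝ (Fin (n + 1))), v0⟫)).card = (T.filter (· < s)).card
      congr 1
      apply Finset.filter_congr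
      intro t ht
      constructor
      · intro h2
        by_contra h3
        push_neg at h3
        have hts : s < t := lt_of_le_of_ne h3 fun he => hsT (he ▸ ht)
        have h4 : ε ≤ t - s := by
          have h5 := hεT t ht
          rwa [abs_of_pos (by linarith)] at h5
        have h5 := (abs_lt.1 hy').2
        linarith
      · intro h2
        have h4 : ε ≤ -(t - s) := by
          have h5 := hεT t ht
          rwa [abs_of_neg (by linarith)] at h5
        have h5 := (abs_lt.1 hy').1
        linarith
  have hfc : Continuous f := hlc.continuous
  have hbij : Function.Bijective hfc.connectedComponentsLift := by
    constructor
    · -- injective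
      intro a b hab
      obtain ⟨x, rfl⟩ := ConnectedComponents.surjective_coe a
      obtain ⟨y, rfl⟩ := ConnectedComponents.surjective_coe b
      rw [hfc.connectedComponentsLift_apply_coe, hfc.connectedComponentsLift_apply_coe] at hab
      set j := f x with hj
      -- the fiber of f over j is preconnected
      set R : Set ℝ := {s | s ∉ T ∧ (T.filter (· < s)).card = (j : ℕ)} with hR
      have hRoc : R.OrdConnected := by
        constructor
        intro s1 hs1 s2 hs2 s hs
        have hsub1 : T.filter (· < s1) ⊆ T.filter (· < s) := fun u hu => by
          rw [Finset.mem_filter] at hu ⊢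
          exact ⟨hu.1, lt_of_lt_of_le hu.2 hs.1⟩
        have hsub2 : T.filter (· < s) ⊆ T.filter (· < s2) := fun u hu => by
          rw [Finset.mem_filter] at hu ⊢
          exact ⟨hu.1, lt_of_lt_of_le hu.2 hs.2⟩
        have hcard : (T.filter (· < s)).card = (j : ℕ) :=
          le_antisymm (hs2.2 ▸ Finset.card_le_card hsub2)
            (hs1.2 ▸ Finset.card_le_card hsub1)
        refine ⟨?_, hcard⟩
        intro hsT
        have hss2 : s < s2 := lt_of_le_of_ne hs.2 (fun h => hs2.1 (h ▸ hsT))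
        have heq : T.filter (· < s1) = T.filter (· < s2) :=
          Finset.eq_of_subset_of_card_le (hsub1.trans hsub2)
            (by rw [hs1.2, hs2.2])
        have : s ∈ T.filter (· < s2) := Finset.mem_filter.2 ⟨hsT, hss2⟩
        rw [← heq] at this
        exact absurd (Finset.mem_filter.1 this).2 (not_lt.2 hs.1)
      have hRconv : Convex ℝ R := hRoc.convex
      set A : Set (EuclideanSpace ℝ (Fin (n + 1))) := {z | z ∈ Metric.closedBall (0 : EuclideanSpace ℝ (Fin (n + 1))) 1 ∧ (⟪z, v0⟫ : ℝ) ∈ R} with hA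
      have hAconv : Convex ℝ A := by
        intro z1 hz1 z2 hz2 a b ha hb hab
        refine ⟨convex_closedBall (0 : EuclideanSpace ℝ (Fin (n + 1))) 1 hz1.1 hz2.1 ha hb hab, ?_⟩
        have : (⟪a • z1 + b • z2, v0⟫ : ℝ) = a • (⟪z1, v0⟫ : ℝ) + b • (⟪z2, v0⟫ : ℝ) := by
          rw [inner_add_left, real_inner_smul_left, real_inner_smul_left]
          simp [smul_eq_mul]
        rw [this]
        exact hRconv hz1.2 hz2.2 ha hb hab
      have hSA : Subtype.val '' (f ⁻¹' {j}) = A := by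
        ext z
        simp only [Set.mem_image, Set.mem_preimage, Set.mem_singleton_iff]
        constructor
        · rintro ⟨w, hw, rfl⟩
          refine ⟨w.2.1, w.2.2, ?_⟩
          have := congrArg Fin.val hw
          exact this
        · rintro ⟨h1, h2, h3⟩
          refine ⟨⟨z, h1, h2⟩, ?_, rfl⟩
          exact Fin.ext h3
      have hSpre : IsPreconnected (f ⁻¹' {j}) := by
        rw [← Topology.IsInducing.subtypeVal.isPreconnected_image, hSA]
        exact hAconv.isPreconnected
      have hxS : x ∈ f ⁻¹' {j} := rfl
      have hyS : y ∈ f ⁻¹' {j} := by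
        simp only [Set.mem_preimage, Set.mem_singleton_iff]
        exact hab.symm
      exact ConnectedComponents.coe_eq_coe'.2
        (hSpre.subset_connectedComponent hyS hxS)
    · -- surjective
      intro j
      obtain ⟨s, hs, hsT, hcnt⟩ := exists_count T hT (j : ℕ) (Nat.lt_succ_iff.mp j.isLt)
      have hxball : s • v0 ∈ Metric.closedBall (0 : EuclideanSpace ℝ (Fin (n + 1))) 1 := by
        rw [mem_closedBall_zero_iff, norm_smul, hv0, mul_one, Real.norm_eq_abs]
        exact abs_le.2 ⟨hs.1, hs.2⟩
      have hinner : (⟪s • v0, v0⟫ : ℝ) = s := by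
        rw [real_inner_smul_left, real_inner_self_eq_norm_sq, hv0]
        ring
      have hxX : s • v0 ∈ X := ⟨hxball, by simp only [Set.mem_setOf_eq, hinner]; exact hsT⟩
      refine ⟨(⟨s • v0, hxX⟩ : X), ?_⟩
      rw [hfc.connectedComponentsLift_apply_coe]
      apply Fin.ext
      show (T.filter (· < ⟪s • v0, v0⟫)).card = (j : ℕ)
      rw [hinner, hcnt]
  have := Nat.card_eq_of_bijective _ hbij
  rw [this, Nat.card_eq_fintype_card, Fintype.card_fin]

private lemma disjoint_hyperplanes_parallel {n : ℕ}
    (v w : EuclideanSpace ℝ (Fin (n + 1))) (hv : ‖v‖ = 1) (hw : ‖w‖ = 1) (c d : ℝ)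
    (h : Disjoint {x : EuclideanSpace ℝ (Fin (n + 1)) | ⟪x, v⟫ = c}
      {x : EuclideanSpace ℝ (Fin (n + 1)) | ⟪x, w⟫ = d}) : w = v ∨ w = -v := by
  by_contra hc
  push_neg at hc
  set p : ℝ := ⟪v, w⟫ with hp
  have hp1 : p ≠ 1 := by
    intro h1
    exact hc.1 ((inner_eq_one_iff_of_norm_eq_one hv hw).1 h1).symm
  have hpm1 : p ≠ -1 := by
    intro h1
    have h2 : (⟪v, -w⟫ : ℝ) = 1 := by rw [inner_neg_right, ← hp, h1]; ring
    have h3 := (inner_eq_one_iff_of_norm_eq_one hv (by rw [norm_neg]; exact hw)).1 h2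
    exact hc.2 (by rw [h3, neg_neg])
  have hp2 : 1 - p ^ 2 ≠ 0 := by
    intro h2
    have h3 : (1 - p) * (1 + p) = 0 := by nlinarith [h2]
    rcases mul_eq_zero.1 h3 with h4 | h4
    · exact hp1 (by linarith)
    · exact hpm1 (by linarith)
  set a := (c - d * p) / (1 - p ^ 2) with ha
  set b := (d - c * p) / (1 - p ^ 2) with hb
  set x := a • v + b • w with hx
  have hvv : (⟪v, v⟫ : ℝ) = 1 := by rw [real_inner_self_eq_norm_sq, hv]; norm_num
  have hww : (⟪w, w⟫ : ℝ) = 1 := by rw [real_inner_self_eq_norm_sq, hw]; norm_num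
  have hwv : (⟪w, v⟫ : ℝ) = p := by rw [real_inner_comm]
  have h1 : (⟪x, v⟫ : ℝ) = c := by
    rw [hx, inner_add_left, real_inner_smul_left, real_inner_smul_left, hvv, hwv, ha, hb]
    field_simp
    ring
  have h2 : (⟪x, w⟫ : ℝ) = d := by
    rw [hx, inner_add_left, real_inner_smul_left, real_inner_smul_left, ← hp, hww, ha, hb]
    field_simp
    ring
  exact Set.disjoint_left.1 h h1 h2

/-- If `P_1, …, P_{k−1}` are pairwise disjoint affine hyperplanes in ℝ^{n+1},
each meeting the open unit ball, then the complement of their union in the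
closed unit ball has exactly `k` connected components. -/
theorem complement_of_disjoint_hyperplanes_components (n k : ℕ) (hk : 1 ≤ k)
    (v : Fin (k - 1) → EuclideanSpace ℝ (Fin (n + 1)))
    (c : Fin (k - 1) → ℝ) (hv : ∀ i, ‖v i‖ = 1)
    (hmeet : ∀ i, ({x : EuclideanSpace ℝ (Fin (n + 1)) | ⟪x, v i⟫ = c i} ∩
      Metric.ball (0 : EuclideanSpace ℝ (Fin (n + 1))) 1).Nonempty)
    (hdisj : Pairwise (fun i j =>
      Disjoint {x : EuclideanSpace ℝ (Fin (n + 1)) | ⟪x, v i⟫ = c i}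
        {x : EuclideanSpace ℝ (Fin (n + 1)) | ⟪x, v j⟫ = c j})) :
    Nat.card (ConnectedComponents
      ↥(Metric.closedBall (0 : EuclideanSpace ℝ (Fin (n + 1))) 1 \
        ⋃ i, {x : EuclideanSpace ℝ (Fin (n + 1)) | ⟪x, v i⟫ = c i})) = k := by
  classical
  have hk' : k - 1 + 1 = k := Nat.succ_pred_eq_of_pos hk
  by_cases hm : k - 1 = 0
  · have hnorm : ‖(EuclideanSpace.single (0 : Fin (n + 1)) (1 : ℝ))‖ = 1 := by
      rw [EuclideanSpace.norm_single]; norm_num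
    have hmain := card_components_slab n _ hnorm ∅ (by simp)
    have hempty : (⋃ i, {x : EuclideanSpace ℝ (Fin (n + 1)) | ⟪x, v i⟫ = c i}) =
        {x : EuclideanSpace ℝ (Fin (n + 1)) |
          ⟪x, EuclideanSpace.single (0 : Fin (n + 1)) (1 : ℝ)⟫ ∈ ((∅ : Finset ℝ) : Set ℝ)} := by
      have : IsEmpty (Fin (k - 1)) := by rw [hm]; exact Fin.isEmpty'
      simp [Set.iUnion_of_empty]
    rw [hempty, hmain]
    simp
    omega
  · have hpos : 0 < k - 1 := Nat.pos_of_ne_zero hm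
    set i0 : Fin (k - 1) := ⟨0, hpos⟩ with hi0
    have hdir : ∀ i, v i = v i0 ∨ v i = -(v i0) := by
      intro i
      by_cases h : i = i0
      · exact Or.inl (by rw [h])
      · exact disjoint_hyperplanes_parallel (v i0) (v i) (hv i0) (hv i) (c i0) (c i)
          (hdisj (Ne.symm h))
    set t : Fin (k - 1) → ℝ := fun i => if v i = v i0 then c i else -(c i) with ht
    have hplane : ∀ i, {x : EuclideanSpace ℝ (Fin (n + 1)) | ⟪x, v i⟫ = c i}
        = {x : EuclideanSpace ℝ (Fin (n + 1)) | ⟪x, v i0⟫ = t i} := by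
      intro i
      by_cases h : v i = v i0
      · simp only [ht, if_pos h, h]
      · have hneg : v i = -(v i0) := (hdir i).resolve_left h
        ext x
        simp only [Set.mem_setOf_eq, ht, if_neg h, hneg, inner_neg_right]
        constructor <;> intro hh <;> linarith
    have hmemt : ∀ i, t i ∈ Set.Ioo (-1 : ℝ) 1 := by
      intro i
      obtain ⟨x, hx1, hx2⟩ := hmeet i
      rw [Set.mem_setOf_eq] at hx1
      rw [mem_ball_zero_iff] at hx2
      have habs : |c i| < 1 := by
        have h1 := abs_real_inner_le_norm x (v i)
        rw [hx1, hv i, mul_one] at h1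
        exact lt_of_le_of_lt h1 hx2
      have : |t i| < 1 := by
        by_cases h : v i = v i0
        · simpa [ht, if_pos h] using habs
        · simpa [ht, if_neg h, abs_neg] using habs
      rcases abs_lt.1 this with ⟨h1, h2⟩
      exact ⟨h1, h2⟩
    have hinj : Function.Injective t := by
      intro i j hij
      by_contra hne
      have hd := hdisj hne
      have hmem : t i • v i0 ∈ {x : EuclideanSpace ℝ (Fin (n + 1)) | ⟪x, v i0⟫ = t i} := by
        show (⟪t i • v i0, v i0⟫ : ℝ) = t i
        rw [real_inner_smul_left, real_inner_self_eq_norm_sq, hv i0]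
        ring
      exact Set.disjoint_left.1 hd
        (by rw [hplane i]; exact hmem)
        (by rw [hplane j, ← hij]; exact hmem)
    set T : Finset ℝ := Finset.image t Finset.univ with hT
    have hTmem : ∀ s ∈ T, s ∈ Set.Ioo (-1 : ℝ) 1 := by
      intro s hs
      obtain ⟨i, _, rfl⟩ := Finset.mem_image.1 hs
      exact hmemt i
    have hcard : T.card = k - 1 := by
      rw [hT, Finset.card_image_of_injective _ hinj, Finset.card_univ, Fintype.card_fin]
    have hunion : (⋃ i, {x : EuclideanSpace ℝ (Fin (n + 1)) | ⟪x, v i⟫ = c i})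
        = {x : EuclideanSpace ℝ (Fin (n + 1)) | ⟪x, v i0⟫ ∈ (T : Set ℝ)} := by
      ext x
      simp only [Set.mem_iUnion, Set.mem_setOf_eq, hT, Finset.coe_image, Finset.coe_univ,
        Set.image_univ, Set.mem_range]
      constructor
      · rintro ⟨i, hi⟩
        exact ⟨i, ((Set.ext_iff.1 (hplane i) x).1 hi).symm⟩
      · rintro ⟨i, hi⟩
        exact ⟨i, (Set.ext_iff.1 (hplane i) x).2 hi.symm⟩
    rw [hunion, card_components_slab n (v i0) (hv i0) T hTmem, hcard, hk']
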